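/- arXiv:1808.06293 — 2 statements merged into one kernel-verified Lean document; each statement's English description precedes it below -/
import Mathlib

section
/- Let D be a non-empty finite oriented simple graph in which every vertex v satisfies d_1^+(v) > d_2^+(v). Then there exists a vertex w of D with d_1^-(w) > d_2^-(w). -/
/-- `NStep A k u v`: there is a directed walk of length `k` from `u` to `v`
in the digraph with arc relation `A`. -/
def NStep {V : Type*} (A : V → V → Prop) : ℕ → V → V → Prop
  | 0 => Eq
  | k + 1 => fun u w => ∃ x, A u x ∧ NStep A k x w

/-- An oriented simple graph: the arc relation has no loops and no 2-cycles. -/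
def Oriented {V : Type*} (A : V → V → Prop) : Prop :=
  (∀ v, ¬ A v v) ∧ ∀ u v, A u v → ¬ A v u

/-- `N_k^+(v)`: the set of vertices `u` with `d(v,u) = k`, where `d` is the
shortest directed-path distance and `d(v,v)` is the length of the shortest
directed cycle through `v` (never `0`).  (Intended for `k ≥ 1`.) -/
def outNbhd {V : Type*} (A : V → V → Prop) (k : ℕ) (v : V) : Set V :=
  {u | NStep A k v u ∧ ∀ j, 1 ≤ j → j < k → ¬ NStep A j v u}

/-- `N_k^-(v)`: the set of vertices `u` with `d(u,v) = k`. -/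
def inNbhd {V : Type*} (A : V → V → Prop) (k : ℕ) (v : V) : Set V :=
  {u | NStep A k u v ∧ ∀ j, 1 ≤ j → j < k → ¬ NStep A j u v}

/-- `d_k^+(v) = |N_k^+(v)|`. -/
noncomputable def outDeg {V : Type*} (A : V → V → Prop) (k : ℕ) (v : V) : ℕ :=
  (outNbhd A k v).ncard

/-- `d_k^-(v) = |N_k^-(v)|`. -/
noncomputable def inDeg {V : Type*} (A : V → V → Prop) (k : ℕ) (v : V) : ℕ :=
  (inNbhd A k v).ncard

/-- `N_k^+(S)`: the set of vertices `u` with `min_{s ∈ S} d(s,u) = k`. -/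
def setOutNbhd {V : Type*} (A : V → V → Prop) (k : ℕ) (S : Set V) : Set V :=
  {u | (∃ s ∈ S, NStep A k s u) ∧ ∀ j, 1 ≤ j → j < k → ∀ s ∈ S, ¬ NStep A j s u}

/-- `d_k^+(S) = |N_k^+(S)|`. -/
noncomputable def setOutDeg {V : Type*} (A : V → V → Prop) (k : ℕ) (S : Set V) : ℕ :=
  (setOutNbhd A k S).ncard

/-- A vertex is a Seymour vertex if `d_1^+(v) ≤ d_2^+(v)`. -/
def SeymourVertex {V : Type*} (A : V → V → Prop) (v : V) : Prop :=
  outDeg A 1 v ≤ outDeg A 2 v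

/-- A digraph is strongly connected if every vertex reaches every other by a
directed path. -/
def StronglyConnected {V : Type*} (A : V → V → Prop) : Prop :=
  ∀ u v : V, ∃ k, NStep A k u v

/-- A digraph is `m`-free if it contains no directed cycle of length at most
`m` (equivalently, no closed walk of length between `1` and `m`). -/
def MFree {V : Type*} (A : V → V → Prop) (m : ℕ) : Prop :=
  ∀ v, ∀ k, 1 ≤ k → k ≤ m → ¬ NStep A k v v

/-- `D` is a `λ`-counterexample (to the SNC): `d_2^+(v) < λ·d_1^+(v)` for
every vertex `v`. -/
def IsLambdaCounterexample {V : Type*} (A : V → V → Prop) (lam : ℝ) : Prop :=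
  ∀ v, (outDeg A 2 v : ℝ) < lam * (outDeg A 1 v : ℝ)

/-- `D` is an edge-minimal `λ`-counterexample: it is a `λ`-counterexample and
no digraph obtained from it by deleting one or more edges is one. -/
def EdgeMinimalCounterexample {V : Type*} (A : V → V → Prop) (lam : ℝ) : Prop :=
  IsLambdaCounterexample A lam ∧
    ∀ B : V → V → Prop, (∀ u v, B u v → A u v) → B ≠ A →
      ¬ IsLambdaCounterexample B lam

open Classical in
lemma sum_outDeg_eq_sum_inDeg {V : Type*} [Fintype V] (A : V → V → Prop) (k : ℕ) :
    ∑ v, outDeg A k v = ∑ w, inDeg A k w := by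
  have hout : ∀ v, outDeg A k v =
      (Finset.univ.filter (fun u => u ∈ outNbhd A k v)).card := by
    intro v
    rw [outDeg, Set.ncard_eq_toFinset_card']
    congr 1
    ext u
    simp
  have hin : ∀ w, inDeg A k w =
      (Finset.univ.filter (fun u => u ∈ inNbhd A k w)).card := by
    intro w
    rw [inDeg, Set.ncard_eq_toFinset_card']
    congr 1
    ext u
    simp
  simp_rw [hout, hin, Finset.card_filter]
  rw [Finset.sum_comm]
  refine Finset.sum_congr rfl fun u _ => Finset.sum_congr rfl fun v _ => ?_
  have : (u ∈ outNbhd A k v) ↔ (v ∈ inNbhd A k u) := Iff.rfl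
  simp_rw [this]

/-- If every vertex of a non-empty finite oriented simple
graph satisfies `d_1^+(v) > d_2^+(v)`, then some vertex `w` satisfies
`d_1^-(w) > d_2^-(w)`. -/
theorem stmt_10 {V : Type*} [Fintype V] [Nonempty V] (A : V → V → Prop)
    (hA : Oriented A) (h : ∀ v : V, outDeg A 2 v < outDeg A 1 v) :
    ∃ w : V, inDeg A 2 w < inDeg A 1 w := by
  by_contra hcon
  push_neg at hcon
  have h1 : ∑ v, outDeg A 2 v < ∑ v, outDeg A 1 v :=
    Finset.sum_lt_sum_of_nonempty Finset.univ_nonempty fun v _ => h v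
  have h2 : ∑ w : V, inDeg A 1 w ≤ ∑ w : V, inDeg A 2 w :=
    Finset.sum_le_sum fun w _ => hcon w
  rw [sum_outDeg_eq_sum_inDeg A 2, sum_outDeg_eq_sum_inDeg A 1] at h1
  omega
end

section
/- Every non-empty finite oriented simple graph contains a vertex v such that d_2^+(v) ≥ ((√5 − 1)/2)·d_1^+(v), where (√5 − 1)/2 is the unique positive real root of x^2 + x = 1. -/
section SNCBasic
variable {V : Type*} {A : V → V → Prop}

lemma nstep_one {u w : V} : NStep A 1 u w ↔ A u w := by
  constructor
  · rintro ⟨x, hux, hxw⟩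
    have hx : x = w := hxw
    rwa [hx] at hux
  · intro h; exact ⟨w, h, rfl⟩

lemma nstep_two {u w : V} : NStep A 2 u w ↔ ∃ x, A u x ∧ A x w := by
  constructor
  · rintro ⟨x, hux, hxw⟩
    exact ⟨x, hux, nstep_one.1 hxw⟩
  · rintro ⟨x, hux, hxw⟩
    exact ⟨x, hux, nstep_one.2 hxw⟩

lemma mem_outNbhd_one {v u : V} : u ∈ outNbhd A 1 v ↔ A v u := by
  constructor
  · intro h; exact nstep_one.1 h.1
  · intro h
    exact ⟨nstep_one.2 h, fun j hj1 hj2 => absurd (lt_of_lt_of_le hj2 hj1) (lt_irrefl _)⟩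

lemma mem_outNbhd_two {v u : V} :
    u ∈ outNbhd A 2 v ↔ (∃ x, A v x ∧ A x u) ∧ ¬ A v u := by
  constructor
  · intro h
    refine ⟨nstep_two.1 h.1, fun hvu => h.2 1 le_rfl one_lt_two (nstep_one.2 hvu)⟩
  · intro h
    refine ⟨nstep_two.2 h.1, fun j hj1 hj2 hstep => ?_⟩
    have hj : j = 1 := by omega
    subst hj
    exact h.2 (nstep_one.1 hstep)

end SNCBasic

section SNCFin
open Finset
variable {V : Type*} [Fintype V]

/-- classical filter -/
noncomputable def filC {V : Type*} (P : Finset V) (p : V → Prop) : Finset V :=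
  @Finset.filter _ p (fun _ => Classical.propDecidable _) P

lemma mem_filC {V : Type*} {P : Finset V} {p : V → Prop} {w : V} :
    w ∈ filC P p ↔ w ∈ P ∧ p w :=
  @Finset.mem_filter _ _ (fun _ => Classical.propDecidable _) _ _

lemma filC_subset {V : Type*} (P : Finset V) (p : V → Prop) : filC P p ⊆ P :=
  @Finset.filter_subset _ _ (fun _ => Classical.propDecidable _) P

/-- first out-neighborhood as a Finset -/
noncomputable def N1f (A : V → V → Prop) (v : V) : Finset V :=
  filC Finset.univ (fun w => A v w)

/-- second out-neighborhood as a Finset -/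
noncomputable def N2f (A : V → V → Prop) (v : V) : Finset V :=
  filC Finset.univ (fun w => w ∈ outNbhd A 2 v)

lemma mem_N1f {A : V → V → Prop} {v w : V} : w ∈ N1f A v ↔ A v w := by
  simp [N1f, mem_filC]

lemma mem_N2f {A : V → V → Prop} {v w : V} :
    w ∈ N2f A v ↔ (∃ x, A v x ∧ A x w) ∧ ¬ A v w := by
  simp [N2f, filC, mem_outNbhd_two]

lemma card_N1f {A : V → V → Prop} (v : V) : (N1f A v).card = outDeg A 1 v := by
  have h : (↑(N1f A v) : Set V) = outNbhd A 1 v := by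
    ext w; simp [mem_N1f, mem_outNbhd_one]
  rw [outDeg, ← h, Set.ncard_coe_finset]

lemma card_N2f {A : V → V → Prop} (v : V) : (N2f A v).card = outDeg A 2 v := by
  have h : (↑(N2f A v) : Set V) = outNbhd A 2 v := by
    ext w; simp [mem_N2f, mem_outNbhd_two]
  rw [outDeg, ← h, Set.ncard_coe_finset]

set_option linter.unusedSectionVars false in
/-- double counting: an oriented relation has at most `p(p-1)/2` arcs inside any finset `P`,
formulated as `2e + p ≤ p²`. -/
lemma oriented_double_count (A : V → V → Prop) (hA : Oriented A) (P : Finset V) :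
    2 * (∑ a ∈ P, (filC P (fun b => A a b)).card) + P.card ≤ P.card * P.card := by
  classical
  have hcf : ∀ a, (filC P (fun b => A a b)).card
      = ∑ b ∈ P, (if A a b then 1 else 0) := by
    intro a
    rw [filC, Finset.card_filter]
  calc 2 * (∑ a ∈ P, (filC P (fun b => A a b)).card) + P.card
      = ∑ a ∈ P, ∑ b ∈ P, ((if A a b then 1 else 0) + (if A b a then 1 else 0)
          + (if a = b then 1 else 0)) := by
        simp only [hcf, Finset.sum_add_distrib]
        rw [Finset.sum_comm (f := fun a b => if A b a then (1:ℕ) else 0)]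
        have hdiag : ∑ a ∈ P, ∑ b ∈ P, (if a = b then (1:ℕ) else 0) = P.card := by
          have h1 : ∀ a ∈ P, ∑ b ∈ P, (if a = b then (1:ℕ) else 0) = 1 := by
            intro a ha
            rw [Finset.sum_ite_eq]
            simp [ha]
          rw [Finset.sum_congr rfl h1]
          simp
        rw [hdiag]
        ring
    _ ≤ ∑ a ∈ P, ∑ b ∈ P, 1 := by
        refine Finset.sum_le_sum (fun a _ => Finset.sum_le_sum (fun b _ => ?_))
        by_cases hab : a = b
        · subst hab
          simp [hA.1 a]
        · by_cases h1 : A a b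
          · simp [h1, hA.2 a b h1, hab]
          · by_cases h2 : A b a <;> simp [h1, h2, hab]
    _ = P.card * P.card := by simp [mul_comm]

/-- sums of counts commute (double counting arcs between two finsets) -/
lemma sum_filC_comm {V : Type*} (P Q : Finset V) (R : V → V → Prop) :
    ∑ a ∈ P, (filC Q (fun b => R a b)).card = ∑ b ∈ Q, (filC P (fun a => R a b)).card := by
  classical
  have h1 : ∀ a, (filC Q (fun b => R a b)).card = ∑ b ∈ Q, (if R a b then 1 else 0) := by
    intro a; rw [filC, Finset.card_filter]
  have h2 : ∀ b, (filC P (fun a => R a b)).card = ∑ a ∈ P, (if R a b then 1 else 0) := by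
    intro b; rw [filC, Finset.card_filter]
  simp only [h1, h2]
  exact Finset.sum_comm

/-- the final arithmetic contradiction -/
lemma snc_final_contra (lam d z : ℝ) (hlam : lam*lam + lam = 1) (hl1 : 0.61 < lam)
    (hl2 : lam < 0.62) (hd : 1 ≤ d) (hz : 1 ≤ z)
    (hA : (1+lam)*z ≥ lam*d + 1)
    (hB : z ≤ lam*d)
    (hC : lam*z*z > (d*d+d)/2 - (lam*d - z)*d - (z*z - z)/2 - z) : False := by
  have ha : z ≥ lam*lam*d + lam := by nlinarith
  nlinarith [mul_nonneg (sub_nonneg.2 ha) (sub_nonneg.2 hB), sq_nonneg (z - lam*d), sq_nonneg d,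
    mul_nonneg (sub_nonneg.2 hB) (by linarith : (0:ℝ) ≤ d), sq_nonneg (d - z)]

end SNCFin

section SNCMain
open Finset
universe u

set_option maxHeartbeats 1600000 in
theorem snc_golden_aux : ∀ (n : ℕ) (V : Type u) [Fintype V] [Nonempty V] (A : V → V → Prop),
    Oriented A → Fintype.card V ≤ n →
    ∃ v : V, (outDeg A 2 v : ℝ) ≥ (Real.sqrt 5 - 1) / 2 * (outDeg A 1 v : ℝ) := by
  intro n
  induction n with
  | zero =>
    intro V _ _ A _ hcard
    have : 0 < Fintype.card V := Fintype.card_pos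
    omega
  | succ n ih =>
    intro V _ _ A hA hcard
    classical
    by_contra hcon
    push_neg at hcon
    set lam : ℝ := (Real.sqrt 5 - 1) / 2 with hlamdef
    have hsq : Real.sqrt 5 * Real.sqrt 5 = 5 := Real.mul_self_sqrt (by norm_num)
    have hs0 : 0 ≤ Real.sqrt 5 := Real.sqrt_nonneg 5
    have hlam : lam * lam + lam = 1 := by
      rw [hlamdef]; linear_combination (1/4 : ℝ) * hsq
    have hl1 : (0.61 : ℝ) < lam := by rw [hlamdef]; nlinarith [hsq, hs0]
    have hl2 : lam < 0.62 := by rw [hlamdef]; nlinarith [hsq, hs0]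
    have hcex : ∀ w : V, (outDeg A 2 w : ℝ) < lam * (outDeg A 1 w : ℝ) := hcon
    have hdeg1 : ∀ w : V, 1 ≤ outDeg A 1 w := by
      intro w
      rcases Nat.eq_zero_or_pos (outDeg A 1 w) with h0 | h1
      · have h := hcex w
        rw [h0] at h
        simp only [Nat.cast_zero, mul_zero] at h
        exact absurd h (not_lt.2 (Nat.cast_nonneg _))
      · exact h1
    obtain ⟨v, -, hvmin'⟩ := Finset.exists_min_image (Finset.univ : Finset V)
      (fun w => outDeg A 1 w) ⟨Classical.arbitrary V, Finset.mem_univ _⟩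
    have hvmin : ∀ w : V, outDeg A 1 v ≤ outDeg A 1 w := fun w => hvmin' w (Finset.mem_univ w)
    set F : Finset V := N1f A v with hFdef
    set M : Finset V := N2f A v with hMdef
    set d : ℕ := F.card with hddef
    set m : ℕ := M.card with hmdef
    have hdv : d = outDeg A 1 v := card_N1f v
    have hmv : m = outDeg A 2 v := card_N2f v
    have hd1 : 1 ≤ d := by rw [hdv]; exact hdeg1 v
    have hvnotF : v ∉ F := fun h => hA.1 v (mem_N1f.1 h)
    have hFM : ∀ w, w ∈ M → w ∉ F := fun w hwM hwF => (mem_N2f.1 hwM).2 (mem_N1f.1 hwF)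
    have hclose : ∀ s, s ∈ F → ∀ w, A s w → w ∈ F ∨ w ∈ M := by
      intro s hsF w hsw
      have hvs : A v s := mem_N1f.1 hsF
      by_cases hvw : A v w
      · exact Or.inl (mem_N1f.2 hvw)
      · exact Or.inr (mem_N2f.2 ⟨⟨s, hvs, hsw⟩, hvw⟩)
    have hm_lt : (m : ℝ) < lam * d := by rw [hdv, hmv]; exact hcex v
    haveI hne : Nonempty {w : V // w ∈ F} := by
      obtain ⟨w, hw⟩ := Finset.card_pos.1 (show 0 < F.card by omega)
      exact ⟨⟨w, hw⟩⟩
    have hcardsub : Fintype.card {w : V // w ∈ F} ≤ n := by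
      have hsub : F ⊆ Finset.univ.erase v :=
        fun w hw => Finset.mem_erase.2 ⟨fun h => hvnotF (h ▸ hw), Finset.mem_univ w⟩
      have h1 := Finset.card_le_card hsub
      rw [Finset.card_erase_of_mem (Finset.mem_univ v)] at h1
      have h2 : Fintype.card {w : V // w ∈ F} = F.card := Fintype.card_coe F
      have h3 : Finset.univ.card = Fintype.card V := rfl
      omega
    obtain ⟨u', hu'⟩ := ih {w : V // w ∈ F} (fun a b => A a.1 b.1)
      ⟨fun a => hA.1 a.1, fun a b h => hA.2 a.1 b.1 h⟩ hcardsub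
    have huF : u'.1 ∈ F := u'.2
    set S : Finset V := filC F (fun w => A u'.1 w) with hSdef
    set Z : Finset V := filC M (fun w => A u'.1 w) with hZdef
    set T : Finset V := filC F (fun w => w ∈ N2f A u'.1) with hTdef
    set Wf : Finset V := N2f A u'.1 \ F with hWfdef
    set x : ℕ := S.card with hxdef
    set z : ℕ := Z.card with hzdef
    set t : ℕ := T.card with htdef
    set W : ℕ := Wf.card with hWdef
    -- transfer of the induction hypothesis
    have himg1 : Subtype.val '' (outNbhd (fun a b : {w : V // w ∈ F} => A a.1 b.1) 1 u')
        = (↑S : Set V) := by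
      ext w
      constructor
      · rintro ⟨b, hb, rfl⟩
        exact Finset.mem_coe.2 (by rw [hSdef]; exact mem_filC.2 ⟨b.2, (mem_outNbhd_one (A := fun a b : {w : V // w ∈ F} => A a.1 b.1)).1 hb⟩)
      · intro hw
        have hw' := Finset.mem_coe.1 hw
        rw [hSdef] at hw'
        obtain ⟨hwF, hAuw⟩ := mem_filC.1 hw'
        exact ⟨⟨w, hwF⟩, (mem_outNbhd_one (A := fun a b : {w : V // w ∈ F} => A a.1 b.1)).2 hAuw, rfl⟩
    have htrans1 : outDeg (fun a b : {w : V // w ∈ F} => A a.1 b.1) 1 u' = x := by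
      rw [outDeg, ← Set.ncard_image_of_injective _ Subtype.val_injective, himg1,
        Set.ncard_coe_finset]
    have himg2 : Subtype.val '' (outNbhd (fun a b : {w : V // w ∈ F} => A a.1 b.1) 2 u')
        ⊆ (↑T : Set V) := by
      rintro w ⟨b, hb, rfl⟩
      obtain ⟨⟨c, hc1, hc2⟩, hnb⟩ := (mem_outNbhd_two (A := fun a b : {w : V // w ∈ F} => A a.1 b.1)).1 hb
      refine Finset.mem_coe.2 ?_
      rw [hTdef]
      exact mem_filC.2 ⟨b.2, mem_N2f.2 ⟨⟨c.1, hc1, hc2⟩, hnb⟩⟩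
    have htrans2 : outDeg (fun a b : {w : V // w ∈ F} => A a.1 b.1) 2 u' ≤ t := by
      rw [outDeg, ← Set.ncard_image_of_injective _ Subtype.val_injective]
      calc (Subtype.val '' (outNbhd (fun a b : {w : V // w ∈ F} => A a.1 b.1) 2 u')).ncard
          ≤ (↑T : Set V).ncard := Set.ncard_le_ncard himg2 (Set.toFinite _)
        _ = t := Set.ncard_coe_finset T
    have hIH : lam * (x:ℝ) ≤ (t:ℝ) := by
      rw [htrans1] at hu'
      have h2 : ((outDeg (fun a b : {w : V // w ∈ F} => A a.1 b.1) 2 u' : ℕ) : ℝ) ≤ (t:ℝ) :=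
        Nat.cast_le.2 htrans2
      linarith [hu']
    -- decomposition of N1(u)
    have hN1u : N1f A u'.1 = S ∪ Z := by
      ext w
      rw [Finset.mem_union, mem_N1f, hSdef, hZdef, mem_filC, mem_filC]
      constructor
      · intro hw
        rcases hclose u'.1 huF w hw with h | h
        · exact Or.inl ⟨h, hw⟩
        · exact Or.inr ⟨h, hw⟩
      · rintro (⟨-, hw⟩ | ⟨-, hw⟩) <;> exact hw
    have hSZdisj : Disjoint S Z := by
      rw [Finset.disjoint_left]
      intro w hwS hwZ
      rw [hSdef, mem_filC] at hwS
      rw [hZdef, mem_filC] at hwZ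
      exact hFM w hwZ.1 hwS.1
    have hxz : outDeg A 1 u'.1 = x + z := by
      rw [← card_N1f, hN1u, Finset.card_union_of_disjoint hSZdisj]
    have hd_le : d ≤ x + z := by rw [← hxz, hdv]; exact hvmin u'.1
    have hTsub : T ⊆ F := by rw [hTdef]; exact filC_subset _ _
    have hSsub : S ⊆ F := by rw [hSdef]; exact filC_subset _ _
    have hxt : x + t + 1 ≤ d := by
      have hSTdisj : Disjoint S T := by
        rw [Finset.disjoint_left]
        intro w hwS hwT
        rw [hSdef, mem_filC] at hwS
        rw [hTdef, mem_filC] at hwT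
        exact (mem_N2f.1 hwT.2).2 hwS.2
      have huS : u'.1 ∉ S := by
        rw [hSdef, mem_filC]; rintro ⟨-, h⟩; exact hA.1 _ h
      have huT : u'.1 ∉ T := by
        rw [hTdef, mem_filC]; rintro ⟨-, h⟩
        obtain ⟨⟨c, h1, h2⟩, -⟩ := mem_N2f.1 h
        exact hA.2 _ _ h1 h2
      have hdisj2 : Disjoint (S ∪ T) ({u'.1} : Finset V) := by
        rw [Finset.disjoint_right]
        intro w hw
        rw [Finset.mem_singleton] at hw
        subst hw
        rw [Finset.mem_union]
        rintro (h | h)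
        · exact huS h
        · exact huT h
      have hsub : S ∪ T ∪ {u'.1} ⊆ F := by
        intro w hw
        rcases Finset.mem_union.1 hw with h | h
        · rcases Finset.mem_union.1 h with h1 | h1
          · exact hSsub h1
          · exact hTsub h1
        · rw [Finset.mem_singleton] at h; subst h; exact huF
      have hcard2 := Finset.card_le_card hsub
      rw [Finset.card_union_of_disjoint hdisj2, Finset.card_union_of_disjoint hSTdisj,
        Finset.card_singleton] at hcard2
      omega
    have hz1 : 1 ≤ z := by omega
    have hZsubM : Z ⊆ M := by rw [hZdef]; exact filC_subset _ _
    have hzm : z ≤ m := Finset.card_le_card hZsubM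
    -- global arc counting
    set e : ℕ := ∑ s ∈ F, (filC F (fun w => A s w)).card with hedef
    set Phi : ℕ := ∑ s ∈ F, (filC M (fun w => A s w)).card with hPhidef
    have hPhiE : d * d ≤ Phi + e := by
      have hper : ∀ s ∈ F, d ≤ (filC M (fun w => A s w)).card + (filC F (fun w => A s w)).card := by
        intro s hsF
        have hsplit : N1f A s = filC F (fun w => A s w) ∪ filC M (fun w => A s w) := by
          ext w
          simp only [Finset.mem_union, mem_filC, mem_N1f]
          constructor
          · intro hw
            rcases hclose s hsF w hw with h | h
            · exact Or.inl ⟨h, hw⟩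
            · exact Or.inr ⟨h, hw⟩
          · rintro (⟨-, hw⟩ | ⟨-, hw⟩) <;> exact hw
        have hdisj : Disjoint (filC F (fun w => A s w)) (filC M (fun w => A s w)) := by
          rw [Finset.disjoint_left]
          intro w h1 h2
          exact hFM w (mem_filC.1 h2).1 (mem_filC.1 h1).1
        have h1 : d ≤ (N1f A s).card := by rw [card_N1f, hdv]; exact hvmin s
        rw [hsplit, Finset.card_union_of_disjoint hdisj] at h1
        omega
      calc d * d = ∑ _s ∈ F, d := by rw [Finset.sum_const, smul_eq_mul]
        _ ≤ ∑ s ∈ F, ((filC M (fun w => A s w)).card + (filC F (fun w => A s w)).card) :=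
            Finset.sum_le_sum hper
        _ = Phi + e := by rw [Finset.sum_add_distrib, hPhidef, hedef]
    have he : 2 * e + d ≤ d * d := by
      have hodc := oriented_double_count A hA F
      rw [← hedef] at hodc
      exact hodc
    set eZ : ℕ := ∑ w ∈ Z, (filC Z (fun b => A w b)).card with heZdef
    have heZ : 2 * eZ + z ≤ z * z := by
      have hodc := oriented_double_count A hA Z
      rw [← heZdef] at hodc
      exact hodc
    -- arcs from F into M, counted at heads
    have hPhiflip : Phi = ∑ w ∈ M, (filC F (fun s => A s w)).card := by
      rw [hPhidef]; exact sum_filC_comm F M (fun a b => A a b)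
    set c : ℕ := (M \ Z).card with hcdef
    have hc : c + z = m := by
      rw [hcdef, Finset.card_sdiff_of_subset hZsubM]
      omega
    have hMZle : ∑ w ∈ M \ Z, (filC F (fun s => A s w)).card ≤ c * d := by
      have hb : ∀ w ∈ M \ Z, (filC F (fun s => A s w)).card ≤ d :=
        fun w _ => Finset.card_le_card (filC_subset _ _)
      calc ∑ w ∈ M \ Z, (filC F (fun s => A s w)).card ≤ (M \ Z).card • d :=
            Finset.sum_le_card_nsmul _ _ _ hb
        _ = c * d := by rw [hcdef, smul_eq_mul]
    have hPhiZ : Phi ≤ (∑ w ∈ Z, (filC F (fun s => A s w)).card) + c * d := by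
      have hsd := Finset.sum_sdiff (f := fun w => (filC F (fun s => A s w)).card) hZsubM
      beta_reduce at hsd
      rw [hPhiflip, ← hsd]
      omega
    -- average over Z
    have hZne : Z.Nonempty := Finset.card_pos.1 (by omega)
    set G : ℤ := ∑ w ∈ Z, (((filC F (fun s => A s w)).card : ℤ)
        - ((filC Z (fun b => A w b)).card : ℤ)) with hGdef
    have havg : ∃ ζ ∈ Z, G ≤ (z : ℤ) * (((filC F (fun s => A s ζ)).card : ℤ)
        - ((filC Z (fun b => A ζ b)).card : ℤ)) := by
      by_contra hno2
      push_neg at hno2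
      have hsum := Finset.sum_lt_sum_of_nonempty hZne hno2
      have h1 : ∑ w ∈ Z, (z:ℤ) * (((filC F (fun s => A s w)).card : ℤ)
          - ((filC Z (fun b => A w b)).card : ℤ)) = (z:ℤ) * G := by
        rw [hGdef, Finset.mul_sum]
      have h2 : ∑ _w ∈ Z, G = (z:ℤ) * G := by
        rw [Finset.sum_const, nsmul_eq_mul]
      rw [h1, h2] at hsum
      exact lt_irrefl _ hsum
    obtain ⟨ζ, hζZ, hζavg⟩ := havg
    have huζ : A u'.1 ζ := by
      have h := hζZ
      rw [hZdef, mem_filC] at h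
      exact h.2
    -- orientedness between F and ζ
    have hpind : (filC F (fun w => A ζ w)).card + (filC F (fun s => A s ζ)).card ≤ d := by
      have hdisj : Disjoint (filC F (fun w => A ζ w)) (filC F (fun s => A s ζ)) := by
        rw [Finset.disjoint_left]
        intro w h1 h2
        exact hA.2 ζ w (mem_filC.1 h1).2 (mem_filC.1 h2).2
      have hsub : filC F (fun w => A ζ w) ∪ filC F (fun s => A s ζ) ⊆ F := by
        intro w hw
        rcases Finset.mem_union.1 hw with h | h
        · exact filC_subset _ _ h
        · exact filC_subset _ _ h
      have h1 := Finset.card_le_card hsub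
      rw [Finset.card_union_of_disjoint hdisj] at h1
      exact h1
    -- out-neighbors of ζ
    have hkey : d ≤ (filC F (fun w => A ζ w)).card + (filC Z (fun b => A ζ b)).card + 1 + W := by
      have hsub : N1f A ζ ⊆ filC F (fun w => A ζ w) ∪ filC Z (fun b => A ζ b) ∪ {v} ∪ Wf := by
        intro w hw
        have hζw : A ζ w := mem_N1f.1 hw
        by_cases hwF : w ∈ F
        · exact Finset.mem_union.2 (Or.inl (Finset.mem_union.2 (Or.inl
            (Finset.mem_union.2 (Or.inl (mem_filC.2 ⟨hwF, hζw⟩))))))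
        · by_cases hwZ : w ∈ Z
          · exact Finset.mem_union.2 (Or.inl (Finset.mem_union.2 (Or.inl
              (Finset.mem_union.2 (Or.inr (mem_filC.2 ⟨hwZ, hζw⟩))))))
          · by_cases hwv : w = v
            · subst hwv
              exact Finset.mem_union.2 (Or.inl (Finset.mem_union.2 (Or.inr
                (Finset.mem_singleton.2 rfl))))
            · refine Finset.mem_union.2 (Or.inr ?_)
              rw [hWfdef]
              refine Finset.mem_sdiff.2 ⟨?_, hwF⟩
              refine mem_N2f.2 ⟨⟨ζ, huζ, hζw⟩, ?_⟩
              intro hAuw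
              rcases hclose u'.1 huF w hAuw with h | h
              · exact hwF h
              · refine hwZ ?_
                rw [hZdef]
                exact mem_filC.2 ⟨h, hAuw⟩
      have hdζ : d ≤ (N1f A ζ).card := by rw [card_N1f, hdv]; exact hvmin ζ
      have h2 := Finset.card_le_card hsub
      have h3 := Finset.card_union_le
        (filC F (fun w => A ζ w) ∪ filC Z (fun b => A ζ b) ∪ {v}) Wf
      have h4 := Finset.card_union_le
        (filC F (fun w => A ζ w) ∪ filC Z (fun b => A ζ b)) ({v} : Finset V)
      have h5 := Finset.card_union_le (filC F (fun w => A ζ w)) (filC Z (fun b => A ζ b))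
      have h6 : ({v} : Finset V).card = 1 := Finset.card_singleton v
      omega
    have hWint : ((filC F (fun s => A s ζ)).card : ℤ) - ((filC Z (fun b => A ζ b)).card : ℤ) - 1
        ≤ (W : ℤ) := by
      omega
    -- z·W lower bound
    have hzW : (Phi : ℤ) - (c : ℤ) * d - (eZ : ℤ) - (z : ℤ) ≤ (z:ℤ) * W := by
      have hGge : (Phi : ℤ) - (c : ℤ) * d - (eZ : ℤ) ≤ G := by
        rw [hGdef, Finset.sum_sub_distrib]
        have h2 : (∑ w ∈ Z, ((filC F (fun s => A s w)).card : ℤ))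
            = ((∑ w ∈ Z, (filC F (fun s => A s w)).card : ℕ) : ℤ) := by push_cast; rfl
        have h3 : (∑ w ∈ Z, ((filC Z (fun b => A w b)).card : ℤ)) = ((eZ : ℕ) : ℤ) := by
          rw [heZdef]; push_cast; rfl
        rw [h2, h3]
        have h4 := hPhiZ
        have h5 : (Phi : ℤ) ≤ ((∑ w ∈ Z, (filC F (fun s => A s w)).card : ℕ) : ℤ) + (c:ℤ) * d := by
          exact_mod_cast h4
        linarith
      have hmul : (z:ℤ) * (((filC F (fun s => A s ζ)).card : ℤ)
          - ((filC Z (fun b => A ζ b)).card : ℤ)) ≤ (z:ℤ) * ((W:ℤ) + 1) := by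
        apply mul_le_mul_of_nonneg_left _ (by positivity)
        omega
      have hring : (z:ℤ) * ((W:ℤ) + 1) = (z:ℤ) * W + z := by ring
      linarith [hGge, hζavg, hmul]
    -- d2(u) ≥ t + W
    have htW : t + W ≤ outDeg A 2 u'.1 := by
      have hdisj : Disjoint T Wf := by
        rw [Finset.disjoint_left]
        intro w hwT hwWf
        rw [hWfdef] at hwWf
        exact (Finset.mem_sdiff.1 hwWf).2 (hTsub hwT)
      have hsub : T ∪ Wf ⊆ N2f A u'.1 := by
        intro w hw
        rcases Finset.mem_union.1 hw with h | h
        · have h' := h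
          rw [hTdef, mem_filC] at h'
          exact h'.2
        · have h' := h
          rw [hWfdef] at h'
          exact (Finset.mem_sdiff.1 h').1
      have h1 := Finset.card_le_card hsub
      rw [Finset.card_union_of_disjoint hdisj, card_N2f] at h1
      exact h1
    -- pass to the reals
    have hxtr : (x:ℝ) + t + 1 ≤ d := by exact_mod_cast hxt
    have hdler : (d:ℝ) ≤ (x:ℝ) + z := by exact_mod_cast hd_le
    have hzmr : (z:ℝ) ≤ m := by exact_mod_cast hzm
    have hz1r : (1:ℝ) ≤ z := by exact_mod_cast hz1
    have hd1r : (1:ℝ) ≤ d := by exact_mod_cast hd1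
    have hcexu : ((outDeg A 2 u'.1 : ℕ):ℝ) < lam * ((x:ℝ) + z) := by
      have h := hcex u'.1
      rw [hxz] at h
      push_cast at h
      exact h
    have h3r : (t:ℝ) + W < lam * ((x:ℝ) + z) := by
      have h1 : ((t + W:ℕ):ℝ) ≤ ((outDeg A 2 u'.1 : ℕ):ℝ) := Nat.cast_le.2 htW
      push_cast at h1
      linarith
    have hWlt : (W:ℝ) < lam * z := by
      have hring : lam * ((x:ℝ) + z) = lam * x + lam * z := by ring
      linarith [hIH]
    have hmr : (m:ℝ) ≤ lam * d := le_of_lt hm_lt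
    have hcr : (c:ℝ) = (m:ℝ) - z := by
      have := hc
      push_cast [← this]
      ring
    have hPhir : (d:ℝ)*d - e ≤ Phi := by
      have h1 : ((d*d : ℕ):ℝ) ≤ ((Phi + e : ℕ):ℝ) := Nat.cast_le.2 hPhiE
      push_cast at h1
      linarith
    have her : (e:ℝ) ≤ ((d:ℝ)*d - d)/2 := by
      have h1 : ((2*e + d : ℕ):ℝ) ≤ ((d*d : ℕ):ℝ) := Nat.cast_le.2 he
      push_cast at h1
      linarith
    have heZr : (eZ:ℝ) ≤ ((z:ℝ)*z - z)/2 := by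
      have h1 : ((2*eZ + z : ℕ):ℝ) ≤ ((z*z : ℕ):ℝ) := Nat.cast_le.2 heZ
      push_cast at h1
      linarith
    have hzWr : (Phi:ℝ) - (c:ℝ)*d - eZ - z ≤ (z:ℝ) * W := by exact_mod_cast hzW
    have hfinC : lam * (z:ℝ) * z > ((d:ℝ)*d + d)/2 - (lam*d - z)*d - ((z:ℝ)*z - z)/2 - z := by
      have h1 : (z:ℝ)*W < (z:ℝ) * (lam * z) :=
        mul_lt_mul_of_pos_left hWlt (by linarith : (0:ℝ) < z)
      have h2 : ((m:ℝ) - z)*d ≤ (lam*d - z)*d := by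
        apply mul_le_mul_of_nonneg_right _ (by linarith : (0:ℝ) ≤ d)
        linarith
      nlinarith [hzWr, hPhir, her, heZr, h1, h2, hcr]
    have hAr : (1+lam)*(z:ℝ) ≥ lam*d + 1 := by
      have hx1 : (1+lam)*(x:ℝ) ≤ (d:ℝ) - 1 := by nlinarith [hIH, hxtr]
      have hmul := mul_le_mul_of_nonneg_left (show (d:ℝ) - x ≤ z by linarith)
        (show (0:ℝ) ≤ 1+lam by linarith)
      nlinarith [hmul, hx1]
    have hBr : (z:ℝ) ≤ lam*d := by linarith
    exact snc_final_contra lam d z hlam hl1 hl2 hd1r hz1r hAr hBr hfinC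

end SNCMain

/-- Every non-empty finite oriented simple graph has a
vertex `v` with `d_2^+(v) ≥ ((√5 - 1)/2)·d_1^+(v)`, where `(√5 - 1)/2` is the
unique positive real root of `x² + x = 1`. -/
theorem stmt_14 {V : Type*} [Fintype V] [Nonempty V] (A : V → V → Prop)
    (hA : Oriented A) :
    ∃ v : V, (outDeg A 2 v : ℝ) ≥ (Real.sqrt 5 - 1) / 2 * (outDeg A 1 v : ℝ) :=
  snc_golden_aux (Fintype.card V) V A hA le_rfl
end
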